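/- arXiv:1110.2284 — 2 statements merged into one kernel-verified Lean document; each statement's English description precedes it below -/
import Mathlib

section
/- Let k be a field, C a k-coalgebra and C* its dual convolution algebra. Every closed left ideal of C* (i.e. a left ideal I with I = (I^⊥)^⊥) that is countably generated as a left ideal is finitely generated. -/
open TensorProduct Coalgebra

noncomputable section

namespace Paper

variable {k : Type*} [Field k] {C : Type*} [AddCommGroup C] [Module k C] [Coalgebra k C]

/-- The convolution product on the dual of a coalgebra. -/
def conv (f g : Module.Dual k C) : Module.Dual k C :=
  LinearMap.mul' k k ∘ₗ TensorProduct.map f g ∘ₗ comul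

lemma conv_apply (f g : Module.Dual k C) (c : C) :
    conv f g c = LinearMap.mul' k k (TensorProduct.map f g (comul c)) := rfl

private lemma conv_assoc (f g h : Module.Dual k C) : conv (conv f g) h = conv f (conv g h) := by
  have h1 : (LinearMap.mul' k k ∘ₗ TensorProduct.map (conv f g) h : C ⊗[k] C →ₗ[k] k)
      = (LinearMap.mul' k k ∘ₗ TensorProduct.map
          (LinearMap.mul' k k ∘ₗ TensorProduct.map f g) h)
        ∘ₗ (comul (R := k) (A := C)).rTensor C := by
    ext x y
    simp [conv_apply]
  have h2 : (LinearMap.mul' k k ∘ₗ TensorProduct.map f (conv g h) : C ⊗[k] C →ₗ[k] k)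
      = (LinearMap.mul' k k ∘ₗ TensorProduct.map f
          (LinearMap.mul' k k ∘ₗ TensorProduct.map g h))
        ∘ₗ (comul (R := k) (A := C)).lTensor C := by
    ext x y
    simp [conv_apply]
  have h3 : (LinearMap.mul' k k ∘ₗ TensorProduct.map f
          (LinearMap.mul' k k ∘ₗ TensorProduct.map g h))
        ∘ₗ (TensorProduct.assoc k C C C).toLinearMap
      = LinearMap.mul' k k ∘ₗ TensorProduct.map
          (LinearMap.mul' k k ∘ₗ TensorProduct.map f g) h := by
    apply TensorProduct.ext_threefold
    intro x y z
    simp [mul_assoc]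
  ext c
  have e1 : conv (conv f g) h c
      = (LinearMap.mul' k k ∘ₗ TensorProduct.map (conv f g) h) (comul c) := rfl
  have e2 : conv f (conv g h) c
      = (LinearMap.mul' k k ∘ₗ TensorProduct.map f (conv g h)) (comul c) := rfl
  rw [e1, e2, h1, h2]
  simp only [LinearMap.comp_apply]
  rw [← Coalgebra.coassoc_apply (R := k) c]
  exact (LinearMap.congr_fun h3 ((comul (R := k) (A := C)).rTensor C (comul c))).symm

private lemma counit_conv (f : Module.Dual k C) : conv counit f = f := by
  have h1 : (TensorProduct.map (counit (R := k) (A := C)) f : C ⊗[k] C →ₗ[k] k ⊗[k] k)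
      = f.lTensor k ∘ₗ (counit (R := k) (A := C)).rTensor C := by
    ext x y
    simp
  ext c
  rw [conv_apply, h1, LinearMap.comp_apply, Coalgebra.rTensor_counit_comul,
    LinearMap.lTensor_tmul, LinearMap.mul'_apply, one_mul]

private lemma conv_counit (f : Module.Dual k C) : conv f counit = f := by
  have h1 : (TensorProduct.map f (counit (R := k) (A := C)) : C ⊗[k] C →ₗ[k] k ⊗[k] k)
      = f.rTensor k ∘ₗ (counit (R := k) (A := C)).lTensor C := by
    ext x y
    simp
  ext c
  rw [conv_apply, h1, LinearMap.comp_apply, Coalgebra.lTensor_counit_comul,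
    LinearMap.rTensor_tmul, LinearMap.mul'_apply, mul_one]

private lemma conv_add (f g h : Module.Dual k C) : conv f (g + h) = conv f g + conv f h := by
  ext c
  simp only [conv_apply, TensorProduct.map_add_right, LinearMap.add_apply, map_add]

private lemma add_conv (f g h : Module.Dual k C) : conv (f + g) h = conv f h + conv g h := by
  ext c
  simp only [conv_apply, TensorProduct.map_add_left, LinearMap.add_apply, map_add]

private lemma zero_conv (f : Module.Dual k C) : conv 0 f = 0 := by
  ext c
  have : TensorProduct.map (0 : Module.Dual k C) f = 0 := by
    ext x y; simp
  simp [conv_apply, this]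

private lemma conv_zero (f : Module.Dual k C) : conv f 0 = 0 := by
  ext c
  have : TensorProduct.map f (0 : Module.Dual k C) = 0 := by
    ext x y; simp
  simp [conv_apply, this]

/-- The convolution algebra structure on the dual of a coalgebra. -/
instance instRingDual : Ring (Module.Dual k C) where
  __ := (inferInstance : AddCommGroup (Module.Dual k C))
  mul := conv
  one := counit
  mul_assoc := conv_assoc
  one_mul := counit_conv
  mul_one := conv_counit
  left_distrib := conv_add
  right_distrib := add_conv
  zero_mul := zero_conv
  mul_zero := conv_zero

lemma dual_mul_def (f g : Module.Dual k C) : f * g = conv f g := rfl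

lemma dual_mul_apply (f g : Module.Dual k C) (c : C) :
    (f * g) c = LinearMap.mul' k k (TensorProduct.map f g (comul c)) := rfl

lemma dual_one_def : (1 : Module.Dual k C) = counit := rfl

variable {k : Type*} [Field k] {C : Type*} [AddCommGroup C] [Module k C] [Coalgebra k C]

instance : IsScalarTower k (Module.Dual k C) (Module.Dual k C) :=
  ⟨fun a f g => by
    show conv (a • f) g = a • conv f g
    ext c
    simp [conv_apply, TensorProduct.map_smul_left]⟩

/-- For a subset `X ⊆ C`, its orthogonal `X^⊥ ⊆ C*`. -/
def perpC (X : Set C) : Set (Module.Dual k C) := {f | ∀ x ∈ X, f x = 0}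

/-- For a subset `Y ⊆ C*`, its orthogonal `Y^⊥ ⊆ C`. -/
def perpD (Y : Set (Module.Dual k C)) : Set C := {c | ∀ f ∈ Y, f c = 0}

/-- For `h ∈ C*`, the map `c ↦ ∑ c₁ h(c₂)`; this is the canonical left action of `C*` on `C`. -/
def wedge (h : Module.Dual k C) : C →ₗ[k] C :=
  (TensorProduct.rid k C).toLinearMap ∘ₗ h.lTensor C ∘ₗ comul

variable (k C) in
/-- A left `C*`-module `M` is rational if every element `m` admits finitely many
`mᵢ ∈ M`, `cᵢ ∈ C` with `f • m = ∑ᵢ f(cᵢ) • mᵢ` for all `f ∈ C*` (the scalar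
`f (cs i) ∈ k` acting through the `k`-multiple `f (cs i) • 1` of the identity of `C*`). -/
def IsRationalLeft (M : Type*) [AddCommGroup M] [Module (Module.Dual k C) M] : Prop :=
  ∀ m : M, ∃ (n : ℕ) (ms : Fin n → M) (cs : Fin n → C),
    ∀ f : Module.Dual k C, f • m = ∑ i, (f (cs i) • (1 : Module.Dual k C)) • ms i

variable (k C) in
/-- A right `C*`-module (i.e. a left module over the opposite ring) `M` is rational if every
element `m` admits finitely many `mᵢ ∈ M`, `cᵢ ∈ C` with `m • f = ∑ᵢ f(cᵢ) • mᵢ` for all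
`f ∈ C*`. -/
def IsRationalRight (M : Type*) [AddCommGroup M] [Module (Module.Dual k C)ᵐᵒᵖ M] : Prop :=
  ∀ m : M, ∃ (n : ℕ) (ms : Fin n → M) (cs : Fin n → C),
    ∀ f : Module.Dual k C,
      (MulOpposite.op f) • m
        = ∑ i, (MulOpposite.op (f (cs i) • (1 : Module.Dual k C))) • ms i

/-- A ring `R` is a left D-ring if every left ideal is a left annihilator. -/
def IsLeftDRing (R : Type*) [Ring R] : Prop :=
  ∀ I : Ideal R, ∃ H : Set R, (I : Set R) = {r : R | ∀ h ∈ H, r * h = 0}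

/-!
Write `I` as the union of an increasing chain of finitely generated left ideals `Jₙ`.
Finitely generated left ideals are closed: for `J = C* f₁ + ⋯ + C* fₘ`, the subspace `J^⊥` is
the kernel of `c ↦ (wedge fᵢ c)ᵢ`, because `(g * f) c = g (wedge f c)`, and a functional
vanishing on that kernel factors through it, which writes it as `∑ gᵢ * fᵢ`.
The subspaces `Jₙ^⊥` of `C` decrease and contain `I^⊥`, and since `I` is closed every functional
vanishing on `I^⊥` vanishes on some `Jₙ^⊥`. This forces some `Jₙ^⊥` to equal `I^⊥`: otherwise
there are vectors `vⱼ ∈ J_{Nⱼ}^⊥ \ J_{Nⱼ₊₁}^⊥`, linearly independent modulo `I^⊥`, and a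
functional equal to `1` on all of them vanishes on `I^⊥` but on no `Jₙ^⊥`.
Then `I = I^⊥⊥ = Jₙ^⊥⊥ = Jₙ`.
-/

section LinearAlgebra

open Submodule

theorem _root_.Submodule.exists_monotone_fg_iSup_eq_span {R M : Type*} [Semiring R]
    [AddCommMonoid M] [Module R M] {G : Set M} (hG : G.Countable) :
    ∃ J : ℕ → Submodule R M, Monotone J ∧ (∀ n, (J n).FG) ∧ ⨆ n, J n = span R G := by
  obtain ⟨g, hg⟩ := (hG.insert 0).exists_eq_range (Set.insert_nonempty 0 G)
  refine ⟨fun n => span R (g '' Set.Iio n),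
    fun m n hmn => span_mono (Set.image_mono (Set.Iio_subset_Iio hmn)),
    fun n => fg_span ((Set.finite_Iio n).image g), ?_⟩
  rw [iSup_span, ← Set.image_iUnion, Set.iUnion_Iio, Set.image_univ, ← hg, span_insert_zero]

variable {K V : Type*} [Field K] [AddCommGroup V] [Module K V]

theorem _root_.LinearMap.exists_comp_eq_of_ker_le {U W : Type*} [AddCommGroup U] [Module K U]
    [AddCommGroup W] [Module K W] (Φ : V →ₗ[K] U) (h : V →ₗ[K] W)
    (hker : LinearMap.ker Φ ≤ LinearMap.ker h) : ∃ G : U →ₗ[K] W, G ∘ₗ Φ = h := by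
  obtain ⟨L, hL⟩ := ((LinearMap.ker Φ).liftQ Φ le_rfl).exists_leftInverse_of_injective
    (ker_liftQ_eq_bot _ _ _ le_rfl)
  refine ⟨(LinearMap.ker Φ).liftQ h hker ∘ₗ L, ?_⟩
  ext c
  have hc : L (Φ c) = Submodule.Quotient.mk c := LinearMap.congr_fun hL (Submodule.Quotient.mk c)
  simp [hc]

theorem _root_.LinearIndependent.exists_dual_forall_apply_eq {ι : Type*} {v : ι → V}
    (hv : LinearIndependent K v) (a : ι → K) :
    ∃ φ : Module.Dual K V, ∀ i, φ (v i) = a i := by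
  obtain ⟨φ, hφ⟩ := LinearMap.exists_extend (Finsupp.linearCombination K a ∘ₗ hv.repr)
  refine ⟨φ, fun i => ?_⟩
  have := LinearMap.congr_fun hφ ⟨v i, subset_span (Set.mem_range_self i)⟩
  simpa [hv.repr_eq_single i] using this

theorem _root_.Submodule.linearIndependent_mkQ_of_antitone {W : ℕ → Submodule K V}
    (hW : Antitone W) {P : Submodule K V} (hP : ∀ n, P ≤ W n) {v : ℕ → V} (hv : ∀ n, v n ∈ W n)
    (hv' : ∀ n, v n ∉ W (n + 1)) : LinearIndependent K (P.mkQ ∘ v) := by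
  classical
  have hmkQ (t : Finset ℕ) (c : ℕ → K) :
      ∑ i ∈ t, c i • (P.mkQ ∘ v) i = 0 ↔ ∑ i ∈ t, c i • v i ∈ P := by
    rw [← Quotient.mk_eq_zero, ← mkQ_apply, map_sum]
    simp only [map_smul, Function.comp_apply]
  simp_rw [linearIndependent_iff', hmkQ]
  intro s
  induction s using Finset.induction_on_min with
  | empty => simp
  | insert a s has ih =>
    intro c hc
    rw [Finset.sum_insert fun ha => lt_irrefl a (has a ha)] at hc
    have htail : ∑ j ∈ s, c j • v j ∈ W (a + 1) :=
      sum_mem fun j hj => smul_mem _ _ (hW (has j hj) (hv j))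
    have hca : c a = 0 := by
      by_contra hne
      exact hv' a ((smul_mem_iff _ hne).1 (((W (a + 1)).add_mem_iff_left htail).1 (hP _ hc)))
    rw [hca, zero_smul, zero_add] at hc
    intro i hi
    rcases Finset.mem_insert.1 hi with rfl | hi
    · exact hca
    · exact ih c hc i hi

theorem _root_.Submodule.exists_le_of_forall_mem_dualAnnihilator {W : ℕ → Submodule K V}
    (hW : Antitone W) {P : Submodule K V} (hP : ∀ n, P ≤ W n)
    (h : ∀ φ ∈ P.dualAnnihilator, ∃ n, φ ∈ (W n).dualAnnihilator) : ∃ n, W n ≤ P := by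
  by_contra! hne
  have hnext (n : ℕ) : ∃ m, n < m ∧ ∃ v ∈ W n, v ∉ W m := by
    obtain ⟨v, hvn, hvP⟩ := SetLike.not_le_iff_exists.1 (hne n)
    obtain ⟨φ, hφv, hφP⟩ := exists_dual_map_eq_bot_of_notMem hvP inferInstance
    obtain ⟨m, hm⟩ := h φ ((mem_dualAnnihilator φ).2 fun w hw => by
      simpa [hφP] using mem_map_of_mem (f := φ) hw)
    refine ⟨max m (n + 1), by omega, v, hvn, fun hv => hφv ?_⟩
    exact (mem_dualAnnihilator φ).1 hm v (hW (le_max_left _ _) hv)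
  choose next hlt v hvW hvnot using hnext
  set N : ℕ → ℕ := fun j => next^[j] 0
  have hN_succ (j : ℕ) : N (j + 1) = next (N j) := Function.iterate_succ_apply' _ _ _
  have hN_mono : Monotone N := monotone_nat_of_le_succ fun j => (hN_succ j).symm ▸ (hlt _).le
  have hN_ge (j : ℕ) : j ≤ N j := by
    induction j with
    | zero => exact Nat.zero_le _
    | succ j ih => exact (hN_succ j).symm ▸ lt_of_le_of_lt ih (hlt _)
  have hli := linearIndependent_mkQ_of_antitone (hW.comp_monotone hN_mono) (fun j => hP (N j))
    (fun j => hvW (N j)) (fun j => by simpa [hN_succ] using hvnot (N j))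
  obtain ⟨φ, hφ⟩ := hli.exists_dual_forall_apply_eq 1
  obtain ⟨n, hn⟩ := h (φ ∘ₗ P.mkQ) ((mem_dualAnnihilator _).2 fun w hw => by
    simp [(Quotient.mk_eq_zero P).2 hw])
  have h0 : φ (P.mkQ (v (N n))) = 0 :=
    (mem_dualAnnihilator _).1 hn _ (hW (hN_ge n) (hvW (N n)))
  simpa using (hφ n).symm.trans h0

end LinearAlgebra

section Closed

open Submodule

theorem mul_apply_eq_apply_wedge (g f : Module.Dual k C) (c : C) :
    (g * f) c = g (wedge f c) := by
  have h : (LinearMap.mul' k k ∘ₗ TensorProduct.map g f : C ⊗[k] C →ₗ[k] k)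
      = g ∘ₗ (TensorProduct.rid k C).toLinearMap ∘ₗ f.lTensor C := by
    ext x y
    simp [mul_comm]
  exact LinearMap.congr_fun h (comul c)

theorem mem_dualCoannihilator_span_of_forall_wedge_eq_zero {ι : Type*} [Fintype ι]
    (f : ι → Module.Dual k C) {c : C} (hc : ∀ i, wedge (f i) c = 0) :
    c ∈ ((span (Module.Dual k C) (Set.range f)).restrictScalars k).dualCoannihilator := by
  rw [mem_dualCoannihilator]
  intro x hx
  obtain ⟨a, rfl⟩ := (mem_span_range_iff_exists_fun _).1 hx
  simp [mul_apply_eq_apply_wedge, hc]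

theorem dualCoannihilator_dualAnnihilator_le_of_fg {J : Ideal (Module.Dual k C)} (hJ : J.FG) :
    (J.restrictScalars k).dualCoannihilator.dualAnnihilator ≤ J.restrictScalars k := by
  obtain ⟨n, f, rfl⟩ := fg_iff_exists_fin_generating_family.1 hJ
  intro h hh
  let Φ : C →ₗ[k] (Fin n → C) := LinearMap.pi fun i => wedge (f i)
  obtain ⟨G, hG⟩ := LinearMap.exists_comp_eq_of_ker_le Φ h fun c hc =>
    (mem_dualAnnihilator h).1 hh c
      (mem_dualCoannihilator_span_of_forall_wedge_eq_zero f fun i => congr_fun hc i)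
  have hh : h = ∑ i, (G ∘ₗ LinearMap.single k (fun _ => C) i) * f i := by
    ext c
    rw [← hG, LinearMap.comp_apply, ← Finset.univ_sum_single (Φ c)]
    simp [Φ, mul_apply_eq_apply_wedge]
  rw [restrictScalars_mem, hh]
  exact sum_mem fun i _ => smul_mem _ _ (subset_span ⟨i, rfl⟩)

theorem perpC_perpD_eq (J : Ideal (Module.Dual k C)) :
    perpC (perpD (J : Set (Module.Dual k C)))
      = ((J.restrictScalars k).dualCoannihilator.dualAnnihilator : Set (Module.Dual k C)) := by
  ext φ
  simp [perpC, perpD, mem_dualAnnihilator, mem_dualCoannihilator]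

end Closed

/-- Every closed left ideal of `C*` that is countably generated
is finitely generated. -/
theorem statement2 {k : Type*} [Field k] {C : Type*} [AddCommGroup C] [Module k C]
    [Coalgebra k C] (I : Ideal (Module.Dual k C))
    (hclosed : (I : Set (Module.Dual k C)) = perpC (perpD (I : Set (Module.Dual k C))))
    (hcount : ∃ G : Set (Module.Dual k C), G.Countable ∧ Submodule.span (Module.Dual k C) G = I) :
    I.FG := by
  obtain ⟨G, hG, hGI⟩ := hcount
  obtain ⟨J, hJ_mono, hJ_fg, hJ_iSup⟩ :=
    Submodule.exists_monotone_fg_iSup_eq_span (R := Module.Dual k C) hG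
  rw [hGI] at hJ_iSup
  rw [perpC_perpD_eq] at hclosed
  have hJI (n : ℕ) : J n ≤ I := hJ_iSup ▸ le_iSup J n
  obtain ⟨n, hn⟩ := Submodule.exists_le_of_forall_mem_dualAnnihilator
    (W := fun n => ((J n).restrictScalars k).dualCoannihilator)
    (fun m n hmn =>
      Submodule.dualCoannihilator_anti ((Submodule.restrictScalars_le k).2 (hJ_mono hmn)))
    (fun n => Submodule.dualCoannihilator_anti ((Submodule.restrictScalars_le k).2 (hJI n)))
    fun φ hφ => by
      rw [← SetLike.mem_coe, ← hclosed, SetLike.mem_coe, ← hJ_iSup,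
        Submodule.mem_iSup_of_directed J hJ_mono.directed_le] at hφ
      obtain ⟨n, hφn⟩ := hφ
      exact ⟨n, Submodule.le_dualCoannihilator_dualAnnihilator _ hφn⟩
  have hIJ : I ≤ J n := fun φ hφ =>
    dualCoannihilator_dualAnnihilator_le_of_fg (hJ_fg n) (Submodule.dualAnnihilator_anti hn
      (Submodule.le_dualCoannihilator_dualAnnihilator _ hφ))
  exact le_antisymm hIJ (hJI n) ▸ hJ_fg n

end Paper
end
end

section
/- Let k be a field, C a k-coalgebra and C* its dual convolution algebra. If H is a simple left C*-module admitting an injective morphism of left C*-modules H → C*, then H is a rational left C*-module. -/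
open TensorProduct Coalgebra

noncomputable section

namespace Paper

variable {k : Type*} [Field k] {C : Type*} [AddCommGroup C] [Module k C] [Coalgebra k C]

variable {k : Type*} [Field k] {C : Type*} [AddCommGroup C] [Module k C] [Coalgebra k C]

/-! Let `x ≠ 0` lie in the image `I` of `H`, so `I = C* x` is a minimal left ideal, and
`h * x = h ∘ w` for `w c = ∑ c₁ x(c₂)`. The range of `w` is a left coideal, so by the local
finiteness of comodules some `w c₀` with `x c₀ ≠ 0` lies in a finite-dimensional left coideal
`S`. Then `S^⊥ * x` is a left ideal of `C*` strictly inside `I`, hence zero: `h * x` only depends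
on `h|_S`, and `I` is finite-dimensional. For `y ∈ I`, the finite-dimensional left ideal `C* y`
is the dual of the range of `c ↦ ∑ c₁ y(c₂)`; a basis `cᵢ` of that range with extended dual
functionals `φᵢ` gives `f * y = ∑ f(cᵢ) (φᵢ * y)`, which is rationality. -/

open Module

section TensorBasis

variable {R ι M N N' : Type*} [CommRing R] [AddCommGroup M] [Module R M] [AddCommGroup N]
  [Module R N] [AddCommGroup N'] [Module R N'] [DecidableEq ι] (b : Basis ι R M)

theorem _root_.TensorProduct.equivFinsuppOfBasisLeft_lTensor_apply (f : N →ₗ[R] N')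
    (z : M ⊗[R] N) (i : ι) :
    equivFinsuppOfBasisLeft b (f.lTensor M z) i = f (equivFinsuppOfBasisLeft b z i) := by
  induction z <;> simp_all

theorem _root_.TensorProduct.equivFinsuppOfBasisLeft_apply_mem_range {f : N →ₗ[R] N'}
    {z : M ⊗[R] N'} (hz : z ∈ LinearMap.range (f.lTensor M)) (i : ι) :
    equivFinsuppOfBasisLeft b z i ∈ LinearMap.range f := by
  obtain ⟨u, rfl⟩ := hz
  exact ⟨_, (equivFinsuppOfBasisLeft_lTensor_apply b f u i).symm⟩

theorem _root_.TensorProduct.mem_range_lTensor_subtype_of_forall {P : Submodule R N}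
    {z : M ⊗[R] N} (h : ∀ i, equivFinsuppOfBasisLeft b z i ∈ P) :
    z ∈ LinearMap.range (P.subtype.lTensor M) := by
  rw [← (equivFinsuppOfBasisLeft b).symm_apply_apply z, equivFinsuppOfBasisLeft_symm_apply]
  exact Submodule.finsuppSum_mem _ _ _ _ fun i _ => ⟨b i ⊗ₜ ⟨_, h i⟩, rfl⟩

end TensorBasis

section CoalgebraSubmodule

variable {R A : Type*} [CommRing R] [AddCommGroup A] [Module R A] [Coalgebra R A]

theorem mem_of_comul_mem_range_lTensor {S : Submodule R A} {s : A}
    (h : comul s ∈ LinearMap.range (S.subtype.lTensor A)) : s ∈ S := by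
  have hcounit (u : A ⊗[R] S) :
      TensorProduct.lid R A (counit.rTensor A (S.subtype.lTensor A u))
        = S.subtype (TensorProduct.lid R S (counit.rTensor S u)) := by
    induction u <;> simp_all
  have hs : s = TensorProduct.lid R A (counit.rTensor A (comul s)) := by
    rw [Coalgebra.rTensor_counit_comul, TensorProduct.lid_tmul, one_smul]
  obtain ⟨u, hu⟩ := h
  rw [hs, ← hu, hcounit]
  exact Submodule.coe_mem _

theorem lTensor_comul_comul_mem_range {S : Submodule R A} {s : A}
    (h : comul s ∈ LinearMap.range (S.subtype.lTensor A)) :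
    comul.lTensor A (comul s) ∈ LinearMap.range ((S.subtype.lTensor A).lTensor A) := by
  obtain ⟨u, hu⟩ := h
  refine ⟨TensorProduct.assoc R A A S (comul.rTensor S u), ?_⟩
  rw [← Coalgebra.coassoc_apply, ← hu, ← LinearMap.comp_apply (LinearMap.rTensor _ _),
    LinearMap.rTensor_comp_lTensor, ← LinearMap.lTensor_comp_rTensor, LinearMap.comp_apply]
  have := TensorProduct.map_map_assoc LinearMap.id LinearMap.id S.subtype (comul.rTensor S u)
  rwa [TensorProduct.map_id] at this

end CoalgebraSubmodule

theorem _root_.LinearMap.finiteDimensional_range_of_ker_le {k V W₁ W₂ : Type*} [Field k]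
    [AddCommGroup V] [Module k V] [AddCommGroup W₁] [Module k W₁] [AddCommGroup W₂] [Module k W₂]
    [FiniteDimensional k W₂] (f : V →ₗ[k] W₁) (g : V →ₗ[k] W₂)
    (h : LinearMap.ker g ≤ LinearMap.ker f) :
    FiniteDimensional k (LinearMap.range f) :=
  have : FiniteDimensional k (V ⧸ LinearMap.ker g) := .equiv g.quotKerEquivRange.symm
  .of_surjective (f.quotKerEquivRange.toLinearMap ∘ₗ Submodule.factor h)
    (f.quotKerEquivRange.surjective.comp (Submodule.factor_surjective h))

theorem _root_.Submodule.exists_forall_eq_sum_dual_smul {k V : Type*} [Field k] [AddCommGroup V]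
    [Module k V] (W : Submodule k V) [FiniteDimensional k W] :
    ∃ (n : ℕ) (φ : Fin n → Dual k V) (v : Fin n → V), ∀ w ∈ W, w = ∑ i, φ i w • v i := by
  let b := finBasis k W
  choose φ hφ using fun i => LinearMap.exists_extend (b.coord i)
  refine ⟨_, φ, fun i => b i, fun w hw => ?_⟩
  have hcoord (i) : φ i w = b.repr ⟨w, hw⟩ i := LinearMap.congr_fun (hφ i) ⟨w, hw⟩
  simp_rw [hcoord]
  have := congrArg Subtype.val (b.sum_repr ⟨w, hw⟩)
  simpa only [Submodule.coe_sum, Submodule.coe_smul] using this.symm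

def IsLeftCoideal (S : Submodule k C) : Prop :=
  ∀ s ∈ S, comul s ∈ LinearMap.range (S.subtype.lTensor C)

theorem IsLeftCoideal.exists_finiteDimensional_le {W : Submodule k C} (hW : IsLeftCoideal W)
    {w : C} (hw : w ∈ W) :
    ∃ S ≤ W, FiniteDimensional k S ∧ IsLeftCoideal S ∧ w ∈ S := by
  classical
  let b := Basis.ofVectorSpace k C
  set y := equivFinsuppOfBasisLeft b (comul (R := k) w)
  set S := Submodule.span k (y.frange : Set C)
  have hyS : ∀ i, y i ∈ S := fun i => by
    by_cases hi : y i = 0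
    · rw [hi]; exact S.zero_mem
    · exact Submodule.subset_span (Finsupp.mem_frange.2 ⟨hi, i, rfl⟩)
  have hwS : comul w ∈ LinearMap.range (S.subtype.lTensor C) :=
    mem_range_lTensor_subtype_of_forall b hyS
  refine ⟨S, ?_, inferInstance, fun s hs => ?_, mem_of_comul_mem_range_lTensor hwS⟩
  · rw [Submodule.span_le]
    rintro _ hv
    obtain ⟨-, i, rfl⟩ := Finsupp.mem_frange.1 hv
    simpa using equivFinsuppOfBasisLeft_apply_mem_range b (hW w hw) i
  · refine (Submodule.span_le (p := (LinearMap.range (S.subtype.lTensor C)).comap comul)).2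
      ?_ hs
    rintro _ hv
    obtain ⟨-, i, rfl⟩ := Finsupp.mem_frange.1 hv
    rw [SetLike.mem_coe, Submodule.mem_comap, ← equivFinsuppOfBasisLeft_lTensor_apply]
    exact equivFinsuppOfBasisLeft_apply_mem_range b (lTensor_comul_comul_mem_range hwS) i

theorem dual_mul_apply_eq_apply_wedge (f h : Dual k C) (c : C) :
    (f * h) c = f (wedge h c) := by
  have key : (LinearMap.mul' k k ∘ₗ TensorProduct.map f h : C ⊗[k] C →ₗ[k] k)
      = f ∘ₗ (TensorProduct.rid k C).toLinearMap ∘ₗ h.lTensor C := by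
    ext a b
    simp [mul_comm]
  exact LinearMap.congr_fun key (comul c)

theorem comul_comp_wedge (x : Dual k C) :
    comul ∘ₗ wedge x = (wedge x).lTensor C ∘ₗ comul := by
  have natural : comul ∘ₗ (TensorProduct.rid k C).toLinearMap ∘ₗ x.lTensor C
      = (TensorProduct.rid k (C ⊗[k] C)).toLinearMap ∘ₗ x.lTensor (C ⊗[k] C)
        ∘ₗ comul.rTensor C := by
    ext a b
    simp
  have contract : (TensorProduct.rid k (C ⊗[k] C)).toLinearMap ∘ₗ x.lTensor (C ⊗[k] C)
        ∘ₗ (TensorProduct.assoc k C C C).symm.toLinearMap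
      = ((TensorProduct.rid k C).toLinearMap ∘ₗ x.lTensor C).lTensor C := by
    ext a b c
    simp [TensorProduct.smul_tmul']
  calc comul ∘ₗ wedge x
      = (TensorProduct.rid k (C ⊗[k] C)).toLinearMap ∘ₗ x.lTensor (C ⊗[k] C)
          ∘ₗ comul.rTensor C ∘ₗ comul := by
        simp only [wedge, ← LinearMap.comp_assoc, natural]
    _ = (TensorProduct.rid k (C ⊗[k] C)).toLinearMap ∘ₗ x.lTensor (C ⊗[k] C)
          ∘ₗ (TensorProduct.assoc k C C C).symm.toLinearMap ∘ₗ comul.lTensor C ∘ₗ comul := by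
        rw [Coalgebra.coassoc_symm]
    _ = (wedge x).lTensor C ∘ₗ comul := by
        simp only [← LinearMap.comp_assoc, contract, wedge, LinearMap.lTensor_comp]

theorem isLeftCoideal_range_wedge (x : Dual k C) :
    IsLeftCoideal (LinearMap.range (wedge x)) := by
  rintro _ ⟨c, rfl⟩
  refine ⟨(wedge x).rangeRestrict.lTensor C (comul c), ?_⟩
  rw [← LinearMap.comp_apply (LinearMap.lTensor _ _), ← LinearMap.lTensor_comp,
    LinearMap.subtype_comp_codRestrict]
  exact (LinearMap.congr_fun (comul_comp_wedge x) c).symm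

theorem IsLeftCoideal.mul_mem_dualAnnihilator {S : Submodule k C} (hS : IsLeftCoideal S)
    (f : Dual k C) {h : Dual k C} (hh : h ∈ S.dualAnnihilator) : f * h ∈ S.dualAnnihilator := by
  rw [Submodule.mem_dualAnnihilator] at hh ⊢
  intro s hs
  obtain ⟨u, hu⟩ := hS s hs
  have hvanish : (LinearMap.mul' k k ∘ₗ TensorProduct.map f h) ∘ₗ S.subtype.lTensor C = 0 := by
    ext c t
    simp [hh t t.2]
  rw [dual_mul_apply, ← hu]
  exact LinearMap.congr_fun hvanish u

def IsLeftCoideal.annihilatorIdeal {S : Submodule k C} (hS : IsLeftCoideal S) :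
    Ideal (Dual k C) where
  toAddSubmonoid := S.dualAnnihilator.toAddSubmonoid
  smul_mem' f _ hh := hS.mul_mem_dualAnnihilator f hh

theorem finiteDimensional_of_isAtom {I : Ideal (Dual k C)} (hI : IsAtom I) :
    FiniteDimensional k (I.restrictScalars k) := by
  obtain ⟨x, hxI, hx0⟩ := Submodule.exists_mem_ne_zero_of_ne_bot hI.1
  have hIx : I = Submodule.span (Dual k C) {x} :=
    ((hI.le_iff.1 ((Submodule.span_singleton_le_iff_mem _ _).2 hxI)).resolve_left
      (by simpa using hx0)).symm
  obtain ⟨c₀, hc₀⟩ : ∃ c, x c ≠ 0 := by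
    by_contra! h
    exact hx0 (LinearMap.ext h)
  obtain ⟨S, -, hSfin, hS, hc₀S⟩ :=
    (isLeftCoideal_range_wedge x).exists_finiteDimensional_le ⟨c₀, rfl⟩
  let mulX := LinearMap.toSpanSingleton (Dual k C) (Dual k C) x
  have hJ : Submodule.map mulX hS.annihilatorIdeal = ⊥ := by
    refine hI.2 _ (lt_of_le_of_ne ?_ fun hJI => ?_)
    · rw [hIx, LinearMap.span_singleton_eq_range]
      exact LinearMap.map_le_range
    · obtain ⟨h, hh, hhx⟩ := (hJI ▸ hxI : x ∈ Submodule.map mulX hS.annihilatorIdeal)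
      apply hc₀
      rw [← hhx, LinearMap.toSpanSingleton_apply, smul_eq_mul, dual_mul_apply_eq_apply_wedge]
      exact (Submodule.mem_dualAnnihilator h).1 hh _ hc₀S
  have hker : LinearMap.ker S.dualRestrict ≤ LinearMap.ker (mulX.restrictScalars k) := by
    intro h hh
    rw [Submodule.dualRestrict_ker_eq_dualAnnihilator] at hh
    have : mulX h ∈ Submodule.map mulX hS.annihilatorIdeal := Submodule.mem_map_of_mem hh
    rwa [hJ] at this
  rw [hIx, LinearMap.span_singleton_eq_range, ← LinearMap.range_restrictScalars]
  exact LinearMap.finiteDimensional_range_of_ker_le _ _ hker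

theorem finiteDimensional_range_wedge {y : Dual k C}
    (hy : FiniteDimensional k ((Submodule.span (Dual k C) {y}).restrictScalars k)) :
    FiniteDimensional k (LinearMap.range (wedge y)) := by
  let r := (wedge y).rangeRestrict
  have hmem (φ : Dual k (LinearMap.range (wedge y))) :
      r.dualMap φ ∈ (Submodule.span (Dual k C) {y}).restrictScalars k := by
    obtain ⟨ψ, hψ⟩ := LinearMap.exists_extend φ
    refine Submodule.mem_span_singleton.2 ⟨ψ, LinearMap.ext fun c => ?_⟩
    rw [smul_eq_mul, dual_mul_apply_eq_apply_wedge, ← hψ]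
    rfl
  have hinj : Function.Injective r.dualMap :=
    LinearMap.dualMap_injective_of_surjective (wedge y).surjective_rangeRestrict
  exact (finite_dual_iff k).1
    (.of_injective (r.dualMap.codRestrict _ hmem) fun a b hab => hinj (congrArg Subtype.val hab))

theorem isRationalLeft_of_injective {M : Type*} [AddCommGroup M] [Module (Dual k C) M]
    (g : M →ₗ[Dual k C] Dual k C) (hg : Function.Injective g)
    (hfin : FiniteDimensional k ((LinearMap.range g).restrictScalars k)) :
    IsRationalLeft k C M := by
  intro m
  have hspan : Submodule.span (Dual k C) {g m} ≤ LinearMap.range g :=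
    (Submodule.span_singleton_le_iff_mem _ _).2 ⟨m, rfl⟩
  have := finiteDimensional_range_wedge
    (Submodule.finiteDimensional_of_le (Submodule.restrictScalars_mono k hspan))
  obtain ⟨n, φ, v, hv⟩ :=
    Submodule.exists_forall_eq_sum_dual_smul (LinearMap.range (wedge (g m)))
  refine ⟨n, fun i => φ i • m, v, fun f => hg (LinearMap.ext fun c => ?_)⟩
  simp only [map_smul, map_sum, smul_eq_mul, smul_mul_assoc, one_mul, LinearMap.sum_apply,
    LinearMap.smul_apply, dual_mul_apply_eq_apply_wedge]
  conv_lhs => rw [hv _ ⟨c, rfl⟩]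
  simp [mul_comm]

universe v

/-- If `H` is a simple left `C*`-module admitting an injective morphism
of left `C*`-modules `H → C*`, then `H` is rational. -/
theorem statement15 {k : Type*} [Field k] {C : Type*} [AddCommGroup C] [Module k C]
    [Coalgebra k C] (H : Type v) [AddCommGroup H] [Module (Module.Dual k C) H]
    (hsimple : IsSimpleModule (Module.Dual k C) H)
    (g : H →ₗ[Module.Dual k C] Module.Dual k C) (hg : Function.Injective g) :
    IsRationalLeft k C H := by
  have hI : IsAtom (LinearMap.range g) :=
    isSimpleModule_iff_isAtom.1 (IsSimpleModule.congr (LinearEquiv.ofInjective g hg).symm)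
  exact isRationalLeft_of_injective g hg (finiteDimensional_of_isAtom hI)

end Paper
end
end
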